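/- Let G = (V,E) be a connected finite simple graph with |V| ≥ 3, and let G' be the bipartite construction of G. Then G admits a fixed point free automorphism if and only if G' admits a fixed point free automorphism. -/
import Mathlib


/-- The bipartite construction: vertex set `V ⊕ (E × {1,2})`; `u ∈ V` is adjacent to
`(e, i)` iff `u` is an endpoint of the edge `e`, and there are no other edges. -/
def bipartiteConstruction {V : Type} (G : SimpleGraph V) :
    SimpleGraph (V ⊕ (G.edgeSet × Bool)) :=
  SimpleGraph.fromRel (fun x y =>
    ∃ (u : V) (e : G.edgeSet) (i : Bool),
      x = Sum.inl u ∧ y = Sum.inr (e, i) ∧ u ∈ (e : Sym2 V))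
/-- A graph has a fixed point free automorphism if some automorphism maps no vertex
to itself. -/
def HasFPFAut {W : Type} (H : SimpleGraph W) : Prop :=
  ∃ φ : H ≃g H, ∀ v, φ v ≠ v
open Sum SimpleGraph

variable {V : Type} {G : SimpleGraph V}

lemma bc_adj_inl_inr (u : V) (p : G.edgeSet × Bool) :
    (bipartiteConstruction G).Adj (inl u) (inr p) ↔ u ∈ (p.1 : Sym2 V) := by
  simp only [bipartiteConstruction, SimpleGraph.fromRel_adj]
  constructor
  · rintro ⟨-, (⟨w,e,i,h1,h2,h3⟩|⟨w,e,i,h1,h2,h3⟩)⟩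
    · cases h1; cases h2; exact h3
    · exact absurd h2 (by simp)
  · intro h
    exact ⟨by simp, Or.inl ⟨u, p.1, p.2, rfl, by simp, h⟩⟩

lemma bc_not_adj_inl_inl (u v : V) :
    ¬ (bipartiteConstruction G).Adj (inl u) (inl v) := by
  simp only [bipartiteConstruction, SimpleGraph.fromRel_adj]
  rintro ⟨-, (⟨w,e,i,h1,h2,h3⟩|⟨w,e,i,h1,h2,h3⟩)⟩ <;> simp at h2

lemma bc_not_adj_inr_inr (p q : G.edgeSet × Bool) :
    ¬ (bipartiteConstruction G).Adj (inr p) (inr q) := by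
  simp only [bipartiteConstruction, SimpleGraph.fromRel_adj]
  rintro ⟨-, (⟨w,e,i,h1,h2,h3⟩|⟨w,e,i,h1,h2,h3⟩)⟩ <;> simp at h1

/-- x has a "twin": a distinct vertex with the same neighbourhood. -/
def HasTwin {W : Type} (H : SimpleGraph W) (x : W) : Prop :=
  ∃ y, y ≠ x ∧ ∀ z, H.Adj y z ↔ H.Adj x z

lemma hasTwin_map {W : Type} {H : SimpleGraph W} (ψ : H ≃g H) {x : W}
    (h : HasTwin H x) : HasTwin H (ψ x) := by
  obtain ⟨y, hy, hN⟩ := h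
  refine ⟨ψ y, fun he => hy (ψ.injective he), fun z => ?_⟩
  have hz : z = ψ (ψ.symm z) := (ψ.apply_symm_apply z).symm
  rw [hz, ψ.map_adj_iff, ψ.map_adj_iff]
  exact hN _

lemma bc_hasTwin_inr (p : G.edgeSet × Bool) :
    HasTwin (bipartiteConstruction G) (inr p) := by
  refine ⟨inr (p.1, !p.2), by simp [Prod.ext_iff], fun z => ?_⟩
  cases z with
  | inl u =>
    rw [(bipartiteConstruction G).adj_comm, (bipartiteConstruction G).adj_comm _ (inl u),
      bc_adj_inl_inr, bc_adj_inl_inr]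
  | inr q =>
    simp only [iff_iff_implies_and_implies]
    exact ⟨fun h => absurd h (bc_not_adj_inr_inr _ _),
           fun h => absurd h (bc_not_adj_inr_inr _ _)⟩

/-- every vertex of a connected graph on ≥ 2 vertices has an incident edge -/
lemma exists_incident [Fintype V] (hconn : G.Connected) (hV : 3 ≤ Fintype.card V)
    (u : V) : ∃ v, G.Adj u v := by
  have : Nontrivial V := Fintype.one_lt_card_iff_nontrivial.mp (by omega)
  obtain ⟨w, hw⟩ := exists_ne u
  obtain ⟨p⟩ := hconn.preconnected u w
  cases p with
  | nil => exact absurd rfl hw.symm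
  | cons h q => exact ⟨_, h⟩

lemma bc_not_hasTwin_inl [Fintype V] (hconn : G.Connected) (hV : 3 ≤ Fintype.card V)
    (u : V) : ¬ HasTwin (bipartiteConstruction G) (inl u) := by
  classical
  rintro ⟨y, hy, hN⟩
  obtain ⟨v0, hv0⟩ := exists_incident hconn hV u
  have hu_mem : (bipartiteConstruction G).Adj (inl u) (inr (⟨s(u, v0), hv0⟩, false)) := by
    rw [bc_adj_inl_inr]; exact Sym2.mem_mk_left _ _
  cases y with
  | inr q =>
    have := (hN _).mpr hu_mem
    exact bc_not_adj_inr_inr _ _ this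
  | inl v =>
    have hvu : v ≠ u := by simpa using hy
    -- every neighbour of u is v
    have h1 : ∀ z, G.Adj u z → z = v := by
      intro z hz
      have : (bipartiteConstruction G).Adj (inl v) (inr (⟨s(u, z), hz⟩, false)) :=
        (hN _).mpr (by rw [bc_adj_inl_inr]; exact Sym2.mem_mk_left _ _)
      rw [bc_adj_inl_inr] at this
      rcases Sym2.mem_iff.mp this with h | h
      · exact absurd h hvu
      · exact h.symm
    -- every neighbour of v is u
    have h2 : ∀ z, G.Adj v z → z = u := by
      intro z hz
      have : (bipartiteConstruction G).Adj (inl u) (inr (⟨s(v, z), hz⟩, false)) :=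
        (hN _).mp (by rw [bc_adj_inl_inr]; exact Sym2.mem_mk_left _ _)
      rw [bc_adj_inl_inr] at this
      rcases Sym2.mem_iff.mp this with h | h
      · exact absurd h.symm hvu
      · exact h.symm
    -- {u, v} is closed under reachability
    have hclosed : ∀ (x y : V), G.Walk x y → (x = u ∨ x = v) → (y = u ∨ y = v) := by
      intro x y p
      induction p with
      | nil => exact id
      | cons h q ih =>
        rintro (rfl | rfl)
        · exact ih (Or.inr (h1 _ h))
        · exact ih (Or.inl (h2 _ h))
    -- but there is a third vertex
    have huniv : (Finset.univ : Finset V) ⊆ {u, v} := by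
      intro w _
      obtain ⟨p⟩ := hconn.preconnected u w
      rcases hclosed u w p (Or.inl rfl) with rfl | rfl <;> simp
    have : Fintype.card V ≤ 2 := by
      calc Fintype.card V = (Finset.univ : Finset V).card := rfl
        _ ≤ ({u, v} : Finset V).card := Finset.card_le_card huniv
        _ ≤ 2 := Finset.card_insert_le _ _ |>.trans (by simp)
    omega

def boolNot : Bool ≃ Bool := ⟨not, not, Bool.not_not, Bool.not_not⟩

lemma mem_mapEdgeSet (φ : G ≃g G) (e : G.edgeSet) (x : V) :
    φ x ∈ (φ.mapEdgeSet e : Sym2 V) ↔ x ∈ (e : Sym2 V) := by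
  show φ x ∈ Sym2.map φ (e : Sym2 V) ↔ _
  rw [Sym2.mem_map]
  constructor
  · rintro ⟨a, ha, hfa⟩
    rwa [← φ.injective hfa]
  · intro h; exact ⟨x, h, rfl⟩


/-- for a connected finite simple graph `G` with at least 3 vertices, `G`
admits a fixed point free automorphism iff its bipartite construction does. -/
theorem bipartite_fpfAut_iff {V : Type} [Fintype V] (G : SimpleGraph V)
    (hconn : G.Connected) (hV : 3 ≤ Fintype.card V) :
    HasFPFAut G ↔ HasFPFAut (bipartiteConstruction G) := by
  constructor
  · rintro ⟨φ, hφ⟩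
    refine ⟨⟨Equiv.sumCongr φ.toEquiv (Equiv.prodCongr φ.mapEdgeSet boolNot), ?_⟩, ?_⟩
    · rintro (u | ⟨e, i⟩) (v | ⟨f, j⟩)
      · simp only [Equiv.sumCongr_apply, Sum.map_inl]
        exact iff_of_false (bc_not_adj_inl_inl _ _) (bc_not_adj_inl_inl _ _)
      · simp only [Equiv.sumCongr_apply, Sum.map_inl, Sum.map_inr, Equiv.prodCongr_apply,
          Prod.map]
        rw [bc_adj_inl_inr, bc_adj_inl_inr]
        exact mem_mapEdgeSet φ f u
      · simp only [Equiv.sumCongr_apply, Sum.map_inl, Sum.map_inr, Equiv.prodCongr_apply,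
          Prod.map]
        rw [(bipartiteConstruction G).adj_comm, (bipartiteConstruction G).adj_comm (inr (e, i))]
        rw [bc_adj_inl_inr, bc_adj_inl_inr]
        exact mem_mapEdgeSet φ e v
      · simp only [Equiv.sumCongr_apply, Sum.map_inr]
        exact iff_of_false (bc_not_adj_inr_inr _ _) (bc_not_adj_inr_inr _ _)
    · rintro (u | ⟨e, i⟩)
      · simp only [RelIso.coe_fn_mk, Equiv.sumCongr_apply, Sum.map_inl, ne_eq, inl.injEq]
        exact hφ u
      · simp only [RelIso.coe_fn_mk, Equiv.sumCongr_apply, Sum.map_inr, ne_eq, inr.injEq,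
          Prod.mk.injEq, Equiv.prodCongr_apply, Prod.map]
        rintro ⟨-, h⟩
        exact Bool.not_ne_self i h
  · rintro ⟨ψ, hψ⟩
    -- ψ maps inl vertices to inl vertices
    have key : ∀ (χ : bipartiteConstruction G ≃g bipartiteConstruction G) (u : V),
        ∃ w, χ (inl u) = inl w := by
      intro χ u
      cases h : χ (inl u) with
      | inl w => exact ⟨w, rfl⟩
      | inr p =>
        exfalso
        have h1 : HasTwin (bipartiteConstruction G) (χ.symm (inr p)) :=
          hasTwin_map χ.symm (bc_hasTwin_inr p)
        have h2 : χ.symm (inr p) = inl u := by rw [← h, χ.symm_apply_apply]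
        rw [h2] at h1
        exact bc_not_hasTwin_inl hconn hV u h1
    choose f hf using key ψ
    choose g hg using key ψ.symm
    have hgf : ∀ u, g (f u) = u := by
      intro u
      have : ψ.symm (inl (f u)) = inl (g (f u)) := hg _
      rw [← hf u, ψ.symm_apply_apply] at this
      exact (inl_injective this.symm)
    have hfg : ∀ u, f (g u) = u := by
      intro u
      have : ψ (inl (g u)) = inl (f (g u)) := hf _
      rw [← hg u, ψ.apply_symm_apply] at this
      exact (inl_injective this.symm)
    -- adjacency is preserved
    have hAdj : ∀ (χ : bipartiteConstruction G ≃g bipartiteConstruction G)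
        (F : V → V) (hF : ∀ u, χ (inl u) = inl (F u)) (u v : V),
        G.Adj u v → G.Adj (F u) (F v) := by
      intro χ F hF u v huv
      have hne : F u ≠ F v := by
        intro h
        apply G.ne_of_adj huv
        apply inl_injective (χ.injective _)
        rw [hF u, hF v, h]
      set e : G.edgeSet := ⟨s(u, v), huv⟩ with he
      have hu : (bipartiteConstruction G).Adj (inl u) (inr (e, false)) := by
        rw [bc_adj_inl_inr]; exact Sym2.mem_mk_left _ _
      have hv : (bipartiteConstruction G).Adj (inl v) (inr (e, false)) := by
        rw [bc_adj_inl_inr]; exact Sym2.mem_mk_right _ _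
      have hu' := χ.map_adj_iff.mpr hu
      have hv' := χ.map_adj_iff.mpr hv
      rw [hF u] at hu'
      rw [hF v] at hv'
      cases hq : χ (inr (e, false)) with
      | inl w =>
        rw [hq] at hu'
        exact absurd hu' (bc_not_adj_inl_inl _ _)
      | inr q =>
        rw [hq, bc_adj_inl_inr] at hu' hv'
        -- q.1 contains both F u and F v, distinct, so q.1 = s(F u, F v)
        have hq1 : (q.1 : Sym2 V) = s(F u, F v) :=
          (Sym2.mem_and_mem_iff hne).mp ⟨hu', hv'⟩
        have := q.1.2
        rw [hq1] at this
        exact G.mem_edgeSet.mp this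
    refine ⟨⟨⟨f, g, hgf, hfg⟩, ?_⟩, ?_⟩
    · intro a b
      simp only [Equiv.coe_fn_mk]
      constructor
      · intro h
        have := hAdj ψ.symm g hg _ _ h
        rwa [hgf, hgf] at this
      · exact hAdj ψ f hf a b
    · intro u h
      simp only [RelIso.coe_fn_mk, Equiv.coe_fn_mk] at h
      apply hψ (inl u)
      rw [hf u, h]
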